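/- For 0 < α < 1, the Sibuya probabilities tend to 0 and are strictly decreasing: (-1)^(k+2) C(α, k+1) < (-1)^(k+1) C(α, k) for all k ≥ 1, and (-1)^(k+1) C(α, k) → 0 as k → ∞. -/
import Mathlib


/-- Generalized binomial coefficient C(α, n) = α(α-1)⋯(α-n+1)/n! for real α. -/
noncomputable def genBinom (α : ℝ) (n : ℕ) : ℝ :=
  (∏ i ∈ Finset.range n, (α - i)) / n.factorial

lemma genBinom_succ (α : ℝ) (n : ℕ) :
    genBinom α (n + 1) = genBinom α n * (α - n) / (n + 1) := by
  unfold genBinom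
  rw [Finset.prod_range_succ, Nat.factorial_succ, div_mul_eq_mul_div, div_div]
  push_cast
  ring

lemma sib_succ (α : ℝ) (n : ℕ) :
    (-1 : ℝ) ^ (n + 2) * genBinom α (n + 1)
      = ((-1 : ℝ) ^ (n + 1) * genBinom α n) * ((n : ℝ) - α) / (n + 1) := by
  rw [genBinom_succ]
  ring

lemma sib_bounds (α : ℝ) (hα0 : 0 < α) (hα1 : α < 1) :
    ∀ k : ℕ, 1 ≤ k → 0 < (-1 : ℝ) ^ (k + 1) * genBinom α k ∧
      (-1 : ℝ) ^ (k + 1) * genBinom α k ≤ α / k := by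
  intro k hk
  induction k with
  | zero => omega
  | succ n ih =>
    rcases Nat.eq_or_lt_of_le hk with h | h
    · have : n = 0 := by omega
      subst this
      simp [genBinom]
      exact hα0
    · have hn : 1 ≤ n := by omega
      obtain ⟨hpos, hle⟩ := ih hn
      have hn1 : (0:ℝ) < (n:ℝ) + 1 := by positivity
      have hna : (0:ℝ) < (n:ℝ) - α := by
        have : (1:ℝ) ≤ n := by exact_mod_cast hn
        linarith
      rw [sib_succ]
      constructor
      · positivity
      · have h1 : ((-1 : ℝ) ^ (n + 1) * genBinom α n) * ((n : ℝ) - α) / (n + 1)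
            ≤ (α / n) * ((n : ℝ) - α) / (n + 1) := by
          gcongr
        have h2 : (α / n) * ((n : ℝ) - α) / (n + 1) ≤ α / (n + 1) := by
          rw [div_le_div_iff₀ (by positivity) hn1]
          have hnpos : (0:ℝ) < n := by exact_mod_cast hn
          rw [div_mul_eq_mul_div, div_mul_eq_mul_div, div_le_iff₀ hnpos]
          nlinarith [mul_pos (mul_pos hα0 hn1) hα0]
        calc _ ≤ (α / n) * ((n : ℝ) - α) / (n + 1) := h1
          _ ≤ α / (n + 1) := h2
          _ = α / ((n:ℕ) + 1 : ℕ) := by push_cast; ring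

theorem stmt_19 (α : ℝ) (hα0 : 0 < α) (hα1 : α < 1) :
    (∀ k : ℕ, 1 ≤ k →
      (-1 : ℝ) ^ (k + 2) * genBinom α (k + 1) < (-1 : ℝ) ^ (k + 1) * genBinom α k) ∧
    Filter.Tendsto (fun k : ℕ => (-1 : ℝ) ^ (k + 1) * genBinom α k) Filter.atTop (nhds 0) := by
  constructor
  · intro k hk
    obtain ⟨hpos, _⟩ := sib_bounds α hα0 hα1 k hk
    rw [sib_succ]
    have hk1 : (1:ℝ) ≤ (k:ℝ) := by exact_mod_cast hk
    have hkpos : (0:ℝ) < (k:ℝ) + 1 := by positivity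
    rw [div_lt_iff₀ hkpos]
    nlinarith
  · apply squeeze_zero'
    · filter_upwards [Filter.eventually_ge_atTop 1] with k hk
      exact (sib_bounds α hα0 hα1 k hk).1.le
    · filter_upwards [Filter.eventually_ge_atTop 1] with k hk
      exact (sib_bounds α hα0 hα1 k hk).2
    · exact Filter.Tendsto.div_atTop tendsto_const_nhds tendsto_natCast_atTop_atTop
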